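/- For every sequence i : ℕ → {0,1} and every n ≥ 1, the barycentric triangle Γ_{(e,12,e)}(i₁,…,iₙ) contains the point (1,0) and also contains a point of the form (t,t) with 0 ≤ t ≤ 1. Consequently diam(Γ_{(e,12,e)}(i₁,…,iₙ)) ≥ √2/2 for every n, so the nested sequence of triangles never converges to a single point (the intersection over all n contains at least two points). -/

import Mathlib

open Matrix MeasureTheory Filter

noncomputable section

/-- A point of ℝ² with the Euclidean metric. -/
def euclPt (x y : ℝ) : EuclideanSpace ℝ (Fin 2) :=
  (WithLp.equiv 2 (Fin 2 → ℝ)).symm ![x, y]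

/-- Projection π(a,b,c) = (b/a, c/a), landing in Euclidean ℝ². -/
def projE (v : Fin 3 → ℝ) : EuclideanSpace ℝ (Fin 2) := euclPt (v 1 / v 0) (v 2 / v 0)

def Vmat : Matrix (Fin 3) (Fin 3) ℝ := !![1,1,1; 0,1,1; 0,0,1]

def prodSeq (C : Fin 2 → Matrix (Fin 3) (Fin 3) ℝ) (i : ℕ → Fin 2) :
    ℕ → Matrix (Fin 3) (Fin 3) ℝ
  | 0 => 1
  | n + 1 => prodSeq C i n * C (i (n + 1))

/-- The subtriangle: convex hull of the π-images of the columns of V·C_{i₁}⋯C_{iₙ}. -/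
def subTriE (C : Fin 2 → Matrix (Fin 3) (Fin 3) ℝ) (i : ℕ → Fin 2) (n : ℕ) :
    Set (EuclideanSpace ℝ (Fin 2)) :=
  convexHull ℝ (Set.range fun j : Fin 3 => projE fun k => (Vmat * prodSeq C i n) k j)

/-- The barycentric matrices G₀(e,12,e), G₁(e,12,e). -/
def Ge12e : Fin 2 → Matrix (Fin 3) (Fin 3) ℝ :=
  ![!![0,0,1/2; 0,1,0; 1,0,1/2], !![1,0,1/2; 0,1,0; 0,0,1/2]]

/-! Every product `Vmat * prodSeq Ge12e i n` has columns `(1, a, a)`, `(1, 1, 0)`, `(1, b, b)`: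
right multiplication by `G₀` or `G₁` keeps the middle column and sends `(a, b)` to
`(b, (a + b) / 2)` or `(a, (a + b) / 2)`. So every triangle has the vertex `(1, 0)` and its other
two vertices `(a, a)`, `(b, b)` on the diagonal, at distance at least `√2 / 2` from `(1, 0)`.
The intervals between `a` and `b` are nested, so by Cantor's intersection theorem a single
diagonal point `(t, t)` lies in every triangle, besides `(1, 0)`. -/

open Set

def diagMat (p : ℝ × ℝ) : Matrix (Fin 3) (Fin 3) ℝ := !![1, 1, 1; p.1, 1, p.2; p.1, 0, p.2]

def diagStep (j : Fin 2) (p : ℝ × ℝ) : ℝ × ℝ := (if j = 0 then p.2 else p.1, (p.1 + p.2) / 2)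

lemma diagMat_mul_Ge12e (j : Fin 2) (p : ℝ × ℝ) :
    diagMat p * Ge12e j = diagMat (diagStep j p) := by
  fin_cases j <;> ext k l <;> fin_cases k <;> fin_cases l <;>
    simp [diagMat, diagStep, Ge12e, Matrix.mul_apply, Fin.sum_univ_three] <;> ring

def diagEnds (i : ℕ → Fin 2) : ℕ → ℝ × ℝ
  | 0 => (0, 1)
  | n + 1 => diagStep (i (n + 1)) (diagEnds i n)

lemma Vmat_mul_prodSeq_Ge12e (i : ℕ → Fin 2) (n : ℕ) :
    Vmat * prodSeq Ge12e i n = diagMat (diagEnds i n) := by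
  induction n with
  | zero =>
    ext k l; fin_cases k <;> fin_cases l <;> simp [prodSeq, Vmat, diagMat, diagEnds]
  | succ n ih => rw [prodSeq, ← mul_assoc, ih, diagMat_mul_Ge12e]; rfl

lemma subTriE_Ge12e (i : ℕ → Fin 2) (n : ℕ) :
    subTriE Ge12e i n = convexHull ℝ
      {euclPt (diagEnds i n).1 (diagEnds i n).1, euclPt 1 0,
        euclPt (diagEnds i n).2 (diagEnds i n).2} := by
  have hcols : (fun j : Fin 3 => projE fun k => diagMat (diagEnds i n) k j) =
      ![euclPt (diagEnds i n).1 (diagEnds i n).1, euclPt 1 0,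
        euclPt (diagEnds i n).2 (diagEnds i n).2] := by
    funext j; fin_cases j <;> simp [projE, diagMat]
  rw [subTriE, Vmat_mul_prodSeq_Ge12e, hcols]
  simp only [Matrix.range_cons, Matrix.range_empty, Set.union_empty, Set.singleton_union]

lemma euclPt_diag_mem_segment {a b t : ℝ} (ht : t ∈ uIcc a b) :
    euclPt t t ∈ segment ℝ (euclPt a a) (euclPt b b) := by
  let f : ℝ →ᵃ[ℝ] EuclideanSpace ℝ (Fin 2) :=
    (LinearMap.toSpanSingleton ℝ _ (euclPt 1 1)).toAffineMap
  have hf : ∀ s, f s = euclPt s s := fun s => by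
    ext j; fin_cases j <;> simp [f, euclPt]
  rw [← hf, ← hf, ← hf, ← image_segment, segment_eq_uIcc]
  exact mem_image_of_mem f ht

lemma uIcc_diagStep_subset (j : Fin 2) (p : ℝ × ℝ) :
    uIcc (diagStep j p).1 (diagStep j p).2 ⊆ uIcc p.1 p.2 := by
  have hmid : (p.1 + p.2) / 2 ∈ uIcc p.1 p.2 := by
    rcases le_total p.1 p.2 with h | h
    · exact mem_uIcc_of_le (by linarith) (by linarith)
    · exact mem_uIcc_of_ge (by linarith) (by linarith)
  apply uIcc_subset_uIcc _ hmid
  by_cases hj : j = 0 <;> simp [diagStep, hj]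

lemma antitone_uIcc_diagEnds (i : ℕ → Fin 2) :
    Antitone fun n => uIcc (diagEnds i n).1 (diagEnds i n).2 :=
  antitone_nat_of_succ_le fun _ => uIcc_diagStep_subset _ _

lemma sqrt_two_div_two_le_dist_euclPt_diag (t : ℝ) :
    √2 / 2 ≤ dist (euclPt 1 0) (euclPt t t) := by
  have h : √2 / 2 = √(1 / 2) := by
    rw [Real.sqrt_div' _ (by norm_num : (0:ℝ) ≤ 2)]; field_simp; simp
  rw [EuclideanSpace.dist_eq, h]
  apply Real.sqrt_le_sqrt
  simp [euclPt, Real.dist_eq]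
  nlinarith [sq_nonneg (2 * t - 1)]

lemma euclPt_one_zero_mem_subTriE_Ge12e (i : ℕ → Fin 2) (n : ℕ) :
    euclPt 1 0 ∈ subTriE Ge12e i n := by
  rw [subTriE_Ge12e]
  exact subset_convexHull ℝ _ (by simp)

lemma euclPt_diag_mem_subTriE_Ge12e {i : ℕ → Fin 2} {n : ℕ} {t : ℝ}
    (ht : t ∈ uIcc (diagEnds i n).1 (diagEnds i n).2) : euclPt t t ∈ subTriE Ge12e i n := by
  rw [subTriE_Ge12e]
  exact segment_subset_convexHull (by simp) (by simp) (euclPt_diag_mem_segment ht)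

lemma uIcc_diagEnds_subset_Icc (i : ℕ → Fin 2) (n : ℕ) :
    uIcc (diagEnds i n).1 (diagEnds i n).2 ⊆ Icc 0 1 := by
  simpa [diagEnds] using antitone_uIcc_diagEnds i n.zero_le

lemma exists_forall_mem_uIcc_diagEnds (i : ℕ → Fin 2) :
    ∃ t, ∀ n, t ∈ uIcc (diagEnds i n).1 (diagEnds i n).2 := by
  obtain ⟨t, ht⟩ := IsCompact.nonempty_iInter_of_sequence_nonempty_isCompact_isClosed
    (fun n => uIcc (diagEnds i n).1 (diagEnds i n).2)
    (fun n => antitone_uIcc_diagEnds i n.le_succ) (fun _ => nonempty_uIcc)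
    isCompact_uIcc (fun _ => isCompact_uIcc.isClosed)
  exact ⟨t, mem_iInter.mp ht⟩

lemma sqrt_two_div_two_le_diam_subTriE_Ge12e (i : ℕ → Fin 2) (n : ℕ) :
    √2 / 2 ≤ Metric.diam (subTriE Ge12e i n) := by
  have hbdd : Bornology.IsBounded (subTriE Ge12e i n) :=
    ((finite_range _).isCompact_convexHull ℝ).isBounded
  calc √2 / 2 ≤ dist (euclPt 1 0) (euclPt (diagEnds i n).2 (diagEnds i n).2) :=
        sqrt_two_div_two_le_dist_euclPt_diag _
    _ ≤ Metric.diam (subTriE Ge12e i n) :=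
        Metric.dist_le_diam_of_mem hbdd (euclPt_one_zero_mem_subTriE_Ge12e i n)
          (euclPt_diag_mem_subTriE_Ge12e right_mem_uIcc)

/-- Every barycentric triangle of (e,12,e) contains (1,0) and a diagonal point (t,t)
with 0 ≤ t ≤ 1, hence has diameter at least √2/2, and the intersection of the nested
triangles contains at least two points (so never converges to a single point). -/
theorem stmt9 (i : ℕ → Fin 2) :
    (∀ n : ℕ, 1 ≤ n →
      euclPt 1 0 ∈ subTriE Ge12e i n ∧
      (∃ t : ℝ, 0 ≤ t ∧ t ≤ 1 ∧ euclPt t t ∈ subTriE Ge12e i n) ∧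
      Real.sqrt 2 / 2 ≤ Metric.diam (subTriE Ge12e i n)) ∧
    ∃ pt qt : EuclideanSpace ℝ (Fin 2), pt ≠ qt ∧
      pt ∈ (⋂ n : ℕ, subTriE Ge12e i (n + 1)) ∧
      qt ∈ (⋂ n : ℕ, subTriE Ge12e i (n + 1)) := by
  refine ⟨fun n _ => ⟨euclPt_one_zero_mem_subTriE_Ge12e i n, ?_,
    sqrt_two_div_two_le_diam_subTriE_Ge12e i n⟩, ?_⟩
  · obtain ⟨h0, h1⟩ := uIcc_diagEnds_subset_Icc i n right_mem_uIcc
    exact ⟨_, h0, h1, euclPt_diag_mem_subTriE_Ge12e right_mem_uIcc⟩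
  · obtain ⟨t, ht⟩ := exists_forall_mem_uIcc_diagEnds i
    refine ⟨euclPt 1 0, euclPt t t, fun h => ?_,
      mem_iInter.mpr fun n => euclPt_one_zero_mem_subTriE_Ge12e i (n + 1),
      mem_iInter.mpr fun n => euclPt_diag_mem_subTriE_Ge12e (ht (n + 1))⟩
    have h0 : (1 : ℝ) = t := congrArg (· 0) h
    have h1 : (0 : ℝ) = t := congrArg (· 1) h
    linarith
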